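/- Let X, Y be discrete random variables and T a deterministic function of X inducing a partition 𝒮 of the support of X. Then the information loss satisfies I(X,Y) − I(T(X),Y) = Σ_{S ∈ 𝒮} Σ_{x ∈ S} P(x) · KL(P_{Y|x} ‖ P_{Y|S}), where P_{Y|S}(y) = P(y | x ∈ S) is the mixture distribution over the cluster S. -/

import Mathlib

open Finset

noncomputable section

/-- Marginal of X under joint P. -/
def margX {α β : Type*} [Fintype β] (P : α → β → ℝ) (x : α) : ℝ := ∑ y, P x y

/-- Marginal of Y under joint P. -/
def margY {α β : Type*} [Fintype α] (P : α → β → ℝ) (y : β) : ℝ := ∑ x, P x y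

/-- Conditional probability P(y|x). -/
def condYX {α β : Type*} [Fintype β] (P : α → β → ℝ) (y : β) (x : α) : ℝ := P x y / margX P x

/-- Conditional probability P(x|y). -/
def condXY {α β : Type*} [Fintype α] (P : α → β → ℝ) (x : α) (y : β) : ℝ := P x y / margY P y

/-- Mutual information of a discrete joint distribution (natural log). -/
def MI {α β : Type*} [Fintype α] [Fintype β] (P : α → β → ℝ) : ℝ :=
  ∑ x, ∑ y, P x y * Real.log (P x y / (margX P x * margY P y))

/-- Joint distribution of (T(X), Y). -/
def jointT {α β τ : Type*} [Fintype α] [DecidableEq τ] (P : α → β → ℝ) (T : α → τ)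
    (t : τ) (y : β) : ℝ :=
  ∑ x ∈ Finset.univ.filter (fun x => T x = t), P x y

/-- Conditional distribution of Y given the cluster T(X) = t. -/
def condYT {α β τ : Type*} [Fintype α] [Fintype β] [DecidableEq τ] (P : α → β → ℝ)
    (T : α → τ) (t : τ) (y : β) : ℝ :=
  jointT P T t y / (∑ x ∈ Finset.univ.filter (fun x => T x = t), margX P x)

/-- Kullback–Leibler divergence (natural log). -/
def KL {β : Type*} [Fintype β] (p q : β → ℝ) : ℝ := ∑ y, p y * Real.log (p y / q y)

/-- L1 distance between distributions. -/
def D1 {β : Type*} [Fintype β] (p q : β → ℝ) : ℝ := ∑ y, |p y - q y|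

/-! Pulling the sum defining `MI (jointT P T)` back along `T` writes both informations as sums
of `P x y` times a logarithm. Since `Y` has the same marginal under both joints, the difference of
the logarithms is `log (P(y|x) / P(y|T x))`, and factoring out `P x` leaves the KL divergence. -/

lemma margX_pos {α β : Type*} [Fintype β] [Nonempty β] {P : α → β → ℝ}
    (hP : ∀ x y, 0 < P x y) (x : α) : 0 < margX P x :=
  sum_pos (fun y _ => hP x y) univ_nonempty

lemma margY_pos {α β : Type*} [Fintype α] [Nonempty α] {P : α → β → ℝ}
    (hP : ∀ x y, 0 < P x y) (y : β) : 0 < margY P y :=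
  sum_pos (fun x _ => hP x y) univ_nonempty

section Coarsening

variable {α β τ : Type*} [Fintype α] [DecidableEq τ] (P : α → β → ℝ) (T : α → τ)

lemma margX_jointT [Fintype β] (t : τ) :
    margX (jointT P T) t = ∑ x ∈ univ.filter (fun x => T x = t), margX P x :=
  sum_comm

lemma margY_jointT [Fintype τ] : margY (jointT P T) = margY P :=
  funext fun y => sum_fiberwise univ T (P · y)

lemma condYT_eq_condYX_jointT [Fintype β] (t : τ) (y : β) :
    condYT P T t y = condYX (jointT P T) y t := by
  rw [condYT, condYX, margX_jointT]

lemma sum_jointT_mul [Fintype τ] (y : β) (f : τ → ℝ) :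
    ∑ t, jointT P T t y * f t = ∑ x, P x y * f (T x) := by
  rw [← sum_fiberwise univ T (fun x => P x y * f (T x))]
  refine sum_congr rfl fun t _ => ?_
  rw [jointT, sum_mul]
  exact sum_congr rfl fun x hx => by rw [(mem_filter.1 hx).2]

lemma MI_jointT [Fintype β] [Fintype τ] :
    MI (jointT P T) = ∑ x, ∑ y, P x y *
      Real.log (jointT P T (T x) y / (margX (jointT P T) (T x) * margY P y)) := by
  rw [MI, margY_jointT, sum_comm, sum_comm (γ := α)]
  exact sum_congr rfl fun y _ => sum_jointT_mul P T y _

lemma jointT_pos (hP : ∀ x y, 0 < P x y) (x : α) (y : β) : 0 < jointT P T (T x) y :=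
  sum_pos (fun x' _ => hP x' y) ⟨x, by simp⟩

lemma margX_jointT_pos [Fintype β] [Nonempty β] (hP : ∀ x y, 0 < P x y) (x : α) :
    0 < margX (jointT P T) (T x) := by
  rw [margX_jointT]
  exact sum_pos (fun x' _ => margX_pos hP x') ⟨x, by simp⟩

end Coarsening

lemma log_div_mul_sub_log_div_mul {p a q b c : ℝ} (hp : 0 < p) (ha : 0 < a) (hq : 0 < q)
    (hb : 0 < b) (hc : 0 < c) :
    Real.log (p / (a * c)) - Real.log (q / (b * c)) = Real.log (p / a / (q / b)) := by
  rw [← Real.log_div (by positivity) (by positivity)]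
  congr 1
  field_simp

theorem info_loss_eq_sum_KL_general {α β τ : Type*} [Fintype α] [Fintype β] [Fintype τ]
    [DecidableEq τ]
    (P : α → β → ℝ) (hP : ∀ x y, 0 < P x y)
    (T : α → τ) :
    MI P - MI (jointT P T)
      = ∑ x, margX P x * KL (fun y => condYX P y x) (fun y => condYT P T (T x) y) := by
  rw [MI_jointT, MI, ← sum_sub_distrib]
  refine sum_congr rfl fun x _ => ?_
  rw [KL, mul_sum, ← sum_sub_distrib]
  refine sum_congr rfl fun y _ => ?_
  have : Nonempty α := ⟨x⟩
  have : Nonempty β := ⟨y⟩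
  have hx := margX_pos hP x
  rw [← mul_sub, log_div_mul_sub_log_div_mul (hP x y) hx (jointT_pos P T hP x y)
    (margX_jointT_pos P T hP x) (margY_pos hP y), condYT_eq_condYX_jointT, condYX, condYX,
    ← mul_assoc, mul_div_cancel₀ _ hx.ne']

/-- Theorem (information-loss decomposition): I(X,Y) − I(T(X),Y) equals the
weighted sum of KL divergences to the cluster mixtures. -/
theorem info_loss_eq_sum_KL {α β τ : Type*} [Fintype α] [Fintype β] [Fintype τ]
    [DecidableEq τ]
    (P : α → β → ℝ) (hP : ∀ x y, 0 < P x y) (hsum : ∑ x, ∑ y, P x y = 1)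
    (T : α → τ) :
    MI P - MI (jointT P T)
      = ∑ x, margX P x * KL (fun y => condYX P y x) (fun y => condYT P T (T x) y) :=
  info_loss_eq_sum_KL_general P hP T
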